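/- Let V be a finite set and G a loopless directed graph on V (given by an irreflexive arc relation). Let G' be the directed graph on the vertex set V × Bool whose arc set is E_1 ∪ E_2, where E_1 = {((u, false), (u, true)) : u ∈ V} and E_2 = {((u, true), (v, false)) : (u, v) is an arc of G}. Then for every natural number k, the following are equivalent: (i) there exists X ⊆ V with |X| ≤ k such that the subgraph of G induced on V ∖ X is acyclic; (ii) there exists a set F of arcs of G' with |F| ≤ k such that the directed graph obtained from G' by deleting the arcs in F is acyclic. -/

import Mathlib

/-!
Given arcs `F` of `G'`, let `X` be the vertices of their tails: every arc `u → v` of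
`G - X` lifts to the path `(u, false) → (u, true) → (v, false)` of `G' - F`, so cycles lift.
Conversely, given `X`, delete the arcs `(u, false) → (u, true)` for `u ∈ X`; a topological
ranking of `G - X` then extends to a ranking of what remains of `G'`.
-/

/-- The arcs of the directed graph `G'` of the reduction from `FVS` to `FAS`: each vertex
`u` is split into `(u, false) → (u, true)`, and each arc `(u, v)` of `G` becomes the arc
`(u, true) → (v, false)`. -/
def splitArc {V : Type*} (Adj : V → V → Prop) : V × Bool → V × Bool → Prop :=
  fun p q =>
    (p.2 = false ∧ q = (p.1, true)) ∨ (p.2 = true ∧ q.2 = false ∧ Adj p.1 q.1)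

open Relation

section Rank

variable {α : Type*} {r : α → α → Prop}

theorem not_transGen_self_of_rank {f : α → ℕ} (hf : ∀ a b, r a b → f a < f b) (a : α) :
    ¬ TransGen r a a := fun h =>
  (lt_irrefl (f a)) (by simpa [transGen_eq_self] using TransGen.lift f hf a a h)

/-- The rank of a vertex is its number of strict ancestors. -/
theorem exists_rank_of_forall_not_transGen_self [Finite α] (h : ∀ a, ¬ TransGen r a a) :
    ∃ f : α → ℕ, ∀ a b, r a b → f a < f b :=
  ⟨fun a => {c | TransGen r c a}.ncard, fun a b hab => Set.ncard_lt_ncard <|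
    (Set.ssubset_iff_of_subset fun _ hc => hc.tail hab).2 ⟨a, .single hab, h a⟩⟩

end Rank

section Split

variable {V : Type*} (Adj : V → V → Prop)

def splitVertexArc (u : V) : (V × Bool) × (V × Bool) := ((u, false), (u, true))

theorem splitArc_splitVertexArc (u : V) :
    splitArc Adj (splitVertexArc u).1 (splitVertexArc u).2 :=
  Or.inl ⟨rfl, rfl⟩

theorem transGen_splitArc_of_transGen {X : Finset V} {F : Finset ((V × Bool) × (V × Bool))}
    (hF : ∀ q ∈ F, q.1.1 ∈ X) {a b : V}
    (h : TransGen (fun a b => Adj a b ∧ a ∉ X ∧ b ∉ X) a b) :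
    TransGen (fun p q => splitArc Adj p q ∧ (p, q) ∉ F) (a, false) (b, false) := by
  refine TransGen.lift' (fun u => (u, false)) ?_ a b h
  rintro u v ⟨huv, hu, -⟩
  exact .head ⟨Or.inl ⟨rfl, rfl⟩, fun hmem => hu (hF _ hmem)⟩
    (.single ⟨Or.inr ⟨rfl, rfl, huv⟩, fun hmem => hu (hF _ hmem)⟩)

variable [Fintype V] [DecidableEq V]

/-- When `u ∈ X`, once `(u, false) → (u, true)` is deleted, `(u, true)` has no incoming and
`(u, false)` no outgoing arc, so they can be ranked first and last. -/
theorem exists_rank_splitArc {X : Finset V} {ρ : V → ℕ}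
    (hρ : ∀ a b, Adj a b ∧ a ∉ X ∧ b ∉ X → ρ a < ρ b) :
    ∃ f : V × Bool → ℕ, ∀ p q,
      splitArc Adj p q ∧ (p, q) ∉ X.image splitVertexArc → f p < f q := by
  set N := Finset.univ.sup ρ
  have hN : ∀ u, ρ u ≤ N := fun u => Finset.le_sup (Finset.mem_univ u)
  refine ⟨fun
    | (u, false) => if u ∈ X then 2 * N + 3 else 2 * ρ u + 1
    | (u, true) => if u ∈ X then 0 else 2 * ρ u + 2, ?_⟩
  rintro ⟨u, bu⟩ q ⟨⟨rfl, rfl⟩ | ⟨rfl, hq, huv⟩, hF⟩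
  · have hu : u ∉ X := fun hu => hF (Finset.mem_image_of_mem _ hu)
    simp [hu]
  · obtain ⟨v, rfl⟩ : ∃ v, q = (v, false) := ⟨q.1, Prod.ext rfl hq⟩
    have := hN u
    dsimp only
    split_ifs with hu hv hv
    any_goals omega
    have := hρ u v ⟨huv, hu, hv⟩
    omega

end Split

theorem fvs_iff_fas_of_split {V : Type*} [Fintype V]
    (Adj : V → V → Prop) (k : ℕ) :
    (∃ X : Finset V, X.card ≤ k ∧
      ∀ v : V, ¬ Relation.TransGen (fun a b => Adj a b ∧ a ∉ X ∧ b ∉ X) v v) ↔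
    (∃ F : Finset ((V × Bool) × (V × Bool)),
      (∀ q ∈ F, splitArc Adj q.1 q.2) ∧ F.card ≤ k ∧
      ∀ p : V × Bool,
        ¬ Relation.TransGen (fun a b => splitArc Adj a b ∧ (a, b) ∉ F) p p) := by
  classical
  constructor
  · rintro ⟨X, hXk, hX⟩
    obtain ⟨ρ, hρ⟩ := exists_rank_of_forall_not_transGen_self hX
    obtain ⟨f, hf⟩ := exists_rank_splitArc Adj hρ
    refine ⟨X.image splitVertexArc, ?_, Finset.card_image_le.trans hXk,
      not_transGen_self_of_rank hf⟩
    simp only [Finset.mem_image]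
    rintro _ ⟨u, -, rfl⟩
    exact splitArc_splitVertexArc Adj u
  · rintro ⟨F, -, hFk, hF⟩
    refine ⟨F.image (·.1.1), Finset.card_image_le.trans hFk, fun v hv => hF (v, false) ?_⟩
    exact transGen_splitArc_of_transGen Adj (X := F.image (·.1.1))
      (fun _ hq => Finset.mem_image_of_mem _ hq) hv
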